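/- arXiv:1506.08661 — 5 statements merged into one kernel-verified Lean document; each statement's English description precedes it below -/
import Mathlib

section
/- Abstract linear response: Let B_w ⊇ B_s ⊇ B_ss be Banach spaces of measures with ‖·‖_w ≤ ‖·‖_s ≤ ‖·‖_ss, and let L_ε (ε ≥ 0) be Markov operators with unique fixed points h_ε ∈ B_ss, L := L_0, h := h_0. Assume: (1) ‖L^k‖_{B_w→B_w} and ‖L_ε^k‖_{B_w→B_w} are bounded uniformly in k and ε; (2) ‖L_ε − L‖_{B_s→B_w} ≤ Cε; (3) there exist C_1 > 0, 0 < ρ < 1 with ‖L_ε^n‖_{V_s^0 → B_s} ≤ C_1 ρ^n for all ε ≥ 0, where V_s^0 = {v ∈ B_s : v(X) = 0}; (4) there is an operator L̂: B_ss → B_s with ‖ε^{-1}(L − L_ε)h − L̂h‖_s → 0 as ε → 0. Then, setting ĥ = (Id − L)^{-1} L̂ h (well defined since L̂h ∈ V_s^0), one has ‖ε^{-1}(h − h_ε) − ĥ‖_w → 0 as ε → 0. -/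
open Filter

/-!
Write `v_ε = ε⁻¹ (h - h_ε)`, `g_ε = ε⁻¹ (L - L_ε) h` and `g = L̂ h`. The fixed point equations give
`v_ε = L_ε v_ε + g_ε` and `ĥ = L ĥ + g`, hence `w_ε = v_ε - ĥ` solves
`w_ε = L_ε w_ε + r_ε` with `r_ε = (L_ε - L) ĥ + (g_ε - g)`, and `‖r_ε‖_w = o(1)` by (2) and (4).
Unrolling `n` steps, `‖w_ε‖_w ≤ C₁ ρⁿ ‖w_ε‖_s + n K ‖r_ε‖_w`. The strong norm of `w_ε` stays
bounded because the Neumann series bounds `‖v_ε‖_s` by `C₁ (1 - ρ)⁻¹ ‖g_ε‖_s`; letting first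
`ε → 0` and then `n → ∞` gives the claim.
-/

theorem tendsto_nhds_zero_of_forall_eventually_le {α : Type*} {l : Filter α} {f : α → ℝ}
    (hf : ∀ x, 0 ≤ f x) {c : ℕ → ℝ} (hc : Tendsto c atTop (nhds 0)) {e : ℕ → α → ℝ}
    (he : ∀ n, Tendsto (e n) l (nhds 0)) (hfe : ∀ n, ∀ᶠ x in l, f x ≤ c n + e n x) :
    Tendsto f l (nhds 0) := by
  refine tendsto_order.2 ⟨fun a ha => Eventually.of_forall fun x => ha.trans_le (hf x),
    fun a ha => ?_⟩
  obtain ⟨n, hn⟩ := (hc.eventually (gt_mem_nhds (half_pos ha))).exists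
  filter_upwards [hfe n, (he n).eventually (gt_mem_nhds (half_pos ha))] with x hfx hex
  linarith

namespace Module.End

variable {R X : Type*} [Ring R] [AddCommGroup X] [Module R X] (T : Module.End R X)

theorem eq_pow_apply_add_sum_of_eq_apply_add {v g : X} (hv : v = T v + g) (n : ℕ) :
    v = (T ^ n) v + ∑ k ∈ Finset.range n, (T ^ k) g := by
  induction n with
  | zero => simp
  | succ n ih =>
    have hstep : (T ^ n) v = (T ^ (n + 1)) v + (T ^ n) g := by
      conv_lhs => rw [hv]
      rw [map_add, pow_succ, Module.End.mul_apply]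
    rw [Finset.sum_range_succ]
    conv_lhs => rw [ih, hstep]
    abel

theorem smul_sub_eq_apply_add_of_apply_eq {S : Module.End R X} {x y : X} (hx : T x = x)
    (hy : S y = y) (c : R) : c • (x - y) = S (c • (x - y)) + c • (T x - S x) := by
  rw [map_smul, ← smul_add, map_sub, hy, hx]
  abel_nf

theorem sub_eq_apply_add_of_eq_apply_add {S : Module.End R X} {v u g g₀ : X} (hv : v = S v + g)
    (hu : u = T u + g₀) : v - u = S (v - u) + ((S u - T u) + (g - g₀)) := by
  rw [map_sub]
  conv_lhs => rw [hv, hu]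
  abel

end Module.End

namespace Seminorm

variable {𝕜 X : Type*} [NormedField 𝕜] [AddCommGroup X] [Module 𝕜 X] {T : Module.End 𝕜 X}
  {V : Set X} {C₁ ρ : ℝ}

theorem apply_le_apply_pow_add_sum_of_eq_apply_add (p : Seminorm 𝕜 X) {v g : X}
    (hvg : v = T v + g) (n : ℕ) :
    p v ≤ p ((T ^ n) v) + ∑ k ∈ Finset.range n, p ((T ^ k) g) :=
  calc p v = p ((T ^ n) v + ∑ k ∈ Finset.range n, (T ^ k) g) :=
        congrArg p (T.eq_pow_apply_add_sum_of_eq_apply_add hvg n)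
    _ ≤ p ((T ^ n) v) + ∑ k ∈ Finset.range n, p ((T ^ k) g) :=
        (map_add_le_add p _ _).trans <| add_le_add_right
          (Finset.le_sum_of_subadditive p (map_zero p).le (map_add_le_add p) _ _) _

theorem sum_apply_pow_le (p : Seminorm 𝕜 X) (hC₁ : 0 ≤ C₁) (hρ₀ : 0 ≤ ρ) (hρ₁ : ρ < 1)
    (hT : ∀ n : ℕ, ∀ v ∈ V, p ((T ^ n) v) ≤ C₁ * ρ ^ n * p v) {g : X} (hg : g ∈ V) (n : ℕ) :
    ∑ k ∈ Finset.range n, p ((T ^ k) g) ≤ C₁ * (1 - ρ)⁻¹ * p g := by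
  have hgeom : ∑ k ∈ Finset.range n, ρ ^ k ≤ (1 - ρ)⁻¹ := by
    rw [Finset.range_eq_Ico, ← one_div, ← pow_zero ρ]
    exact geom_sum_Ico_le_of_lt_one hρ₀ hρ₁
  calc ∑ k ∈ Finset.range n, p ((T ^ k) g)
      ≤ ∑ k ∈ Finset.range n, C₁ * ρ ^ k * p g := Finset.sum_le_sum fun k _ => hT k g hg
    _ = C₁ * p g * ∑ k ∈ Finset.range n, ρ ^ k := by rw [Finset.mul_sum]; ring_nf
    _ ≤ C₁ * p g * (1 - ρ)⁻¹ := by gcongr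
    _ = C₁ * (1 - ρ)⁻¹ * p g := by ring

theorem apply_le_of_eq_apply_add (p : Seminorm 𝕜 X) (hC₁ : 0 ≤ C₁) (hρ₀ : 0 ≤ ρ) (hρ₁ : ρ < 1)
    (hT : ∀ n : ℕ, ∀ v ∈ V, p ((T ^ n) v) ≤ C₁ * ρ ^ n * p v) {v g : X} (hv : v ∈ V)
    (hg : g ∈ V) (hvg : v = T v + g) :
    p v ≤ C₁ * (1 - ρ)⁻¹ * p g := by
  have hstep (n : ℕ) : p v ≤ C₁ * ρ ^ n * p v + C₁ * (1 - ρ)⁻¹ * p g :=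
    (p.apply_le_apply_pow_add_sum_of_eq_apply_add hvg n).trans <|
      add_le_add (hT n v hv) (p.sum_apply_pow_le hC₁ hρ₀ hρ₁ hT hg n)
  have hlim : Tendsto (fun n : ℕ => C₁ * ρ ^ n * p v + C₁ * (1 - ρ)⁻¹ * p g) atTop
      (nhds (C₁ * 0 * p v + C₁ * (1 - ρ)⁻¹ * p g)) :=
    (((tendsto_pow_atTop_nhds_zero_of_lt_one hρ₀ hρ₁).const_mul C₁).mul_const _).add_const _
  simpa using ge_of_tendsto' hlim hstep

theorem apply_le_pow_add_of_eq_apply_add (pw ps : Seminorm 𝕜 X) (hws : ∀ x, pw x ≤ ps x)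
    {K : ℝ} (hK : ∀ k : ℕ, ∀ x, pw ((T ^ k) x) ≤ K * pw x)
    (hT : ∀ n : ℕ, ∀ v ∈ V, ps ((T ^ n) v) ≤ C₁ * ρ ^ n * ps v) {w r : X} (hw : w ∈ V)
    (hwr : w = T w + r) (n : ℕ) :
    pw w ≤ C₁ * ρ ^ n * ps w + n * K * pw r :=
  calc pw w ≤ pw ((T ^ n) w) + ∑ k ∈ Finset.range n, pw ((T ^ k) r) :=
        pw.apply_le_apply_pow_add_sum_of_eq_apply_add hwr n
    _ ≤ C₁ * ρ ^ n * ps w + ∑ _k ∈ Finset.range n, K * pw r :=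
        add_le_add ((hws _).trans (hT n w hw)) (Finset.sum_le_sum fun k _ => hK k r)
    _ = C₁ * ρ ^ n * ps w + n * K * pw r := by
        rw [Finset.sum_const, Finset.card_range, nsmul_eq_mul, mul_assoc (n : ℝ)]

theorem tendsto_zero_of_eq_apply_add {ι : Type*} {l : Filter ι} (pw ps : Seminorm 𝕜 X)
    (hws : ∀ x, pw x ≤ ps x) {S : ι → Module.End 𝕜 X} {K M : ℝ} (hC₁ : 0 ≤ C₁) (hρ₀ : 0 ≤ ρ)
    (hρ₁ : ρ < 1) (hK : ∀ᶠ i in l, ∀ k : ℕ, ∀ x, pw ((S i ^ k) x) ≤ K * pw x)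
    (hS : ∀ᶠ i in l, ∀ n : ℕ, ∀ v ∈ V, ps ((S i ^ n) v) ≤ C₁ * ρ ^ n * ps v)
    {w r : ι → X} (hw : ∀ᶠ i in l, w i ∈ V) (hwr : ∀ᶠ i in l, w i = S i (w i) + r i)
    (hM : ∀ᶠ i in l, ps (w i) ≤ M) (hr : Tendsto (fun i => pw (r i)) l (nhds 0)) :
    Tendsto (fun i => pw (w i)) l (nhds 0) := by
  refine tendsto_nhds_zero_of_forall_eventually_le (fun i => apply_nonneg _ _)
    (c := fun n => C₁ * ρ ^ n * M) ?_ (fun n => by simpa using hr.const_mul (n * K)) fun n => ?_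
  · simpa using ((tendsto_pow_atTop_nhds_zero_of_lt_one hρ₀ hρ₁).const_mul C₁).mul_const M
  filter_upwards [hK, hS, hw, hwr, hM] with i hKi hSi hwi hwri hMi
  calc pw (w i) ≤ C₁ * ρ ^ n * ps (w i) + n * K * pw (r i) :=
        pw.apply_le_pow_add_of_eq_apply_add ps hws hKi hSi hwi hwri n
    _ ≤ C₁ * ρ ^ n * M + n * K * pw (r i) := by gcongr

end Seminorm

theorem stmt6_general
    {X : Type*} [AddCommGroup X] [Module ℝ X]
    (nw ns : Seminorm ℝ X)
    (hws : ∀ x, nw x ≤ ns x)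
    (mass : X →ₗ[ℝ] ℝ)
    (L : ℝ → Module.End ℝ X)
    (h : ℝ → X)
    (hmarkov : ∀ ε ≥ (0:ℝ), ∀ x, mass (L ε x) = mass x)
    (hfix : ∀ ε ≥ (0:ℝ), L ε (h ε) = h ε ∧ mass (h ε) = 1)
    (K : ℝ) (h1 : ∀ ε ≥ (0:ℝ), ∀ k : ℕ, ∀ x, nw ((L ε ^ k) x) ≤ K * nw x)
    (C : ℝ) (h2 : ∀ ε > (0:ℝ), ∀ x, nw (L ε x - L 0 x) ≤ C * ε * ns x)
    (C1 ρ : ℝ) (hC1 : 0 < C1) (hρ0 : 0 < ρ) (hρ1 : ρ < 1)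
    (h3 : ∀ ε ≥ (0:ℝ), ∀ n : ℕ, ∀ v, mass v = 0 → ns ((L ε ^ n) v) ≤ C1 * ρ ^ n * ns v)
    (Lhat : X →ₗ[ℝ] X)
    (h4 : Tendsto (fun ε : ℝ => ns (ε⁻¹ • (L 0 (h 0) - L ε (h 0)) - Lhat (h 0)))
      (nhdsWithin 0 (Set.Ioi 0)) (nhds 0))
    (hhat : X)
    (hhat_def : hhat - L 0 hhat = Lhat (h 0)) (hhat0 : mass hhat = 0) :
    Tendsto (fun ε : ℝ => nw (ε⁻¹ • (h 0 - h ε) - hhat))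
      (nhdsWithin 0 (Set.Ioi 0)) (nhds 0) := by
  set v : ℝ → X := fun ε => ε⁻¹ • (h 0 - h ε)
  set g : ℝ → X := fun ε => ε⁻¹ • (L 0 (h 0) - L ε (h 0))
  have hcontr : ∀ ε > (0:ℝ), ∀ n : ℕ, ∀ u ∈ LinearMap.ker mass,
      ns ((L ε ^ n) u) ≤ C1 * ρ ^ n * ns u := fun ε hε n u hu => h3 ε hε.le n u hu
  have hv_mem : ∀ ε > (0:ℝ), v ε ∈ LinearMap.ker mass := fun ε hε => by
    simp [v, (hfix 0 le_rfl).2, (hfix ε hε.le).2]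
  have hg_mem : ∀ ε > (0:ℝ), g ε ∈ LinearMap.ker mass := fun ε hε => by
    simp [g, hmarkov 0 le_rfl, hmarkov ε hε.le]
  have hv_eq : ∀ ε > (0:ℝ), v ε = L ε (v ε) + g ε := fun ε hε =>
    (L 0).smul_sub_eq_apply_add_of_apply_eq (hfix 0 le_rfl).1 (hfix ε hε.le).1 ε⁻¹
  have hhat_eq : hhat = L 0 hhat + Lhat (h 0) := by rw [← hhat_def, add_sub_cancel]
  have hw_eq : ∀ ε > (0:ℝ), v ε - hhat
      = L ε (v ε - hhat) + ((L ε hhat - L 0 hhat) + (g ε - Lhat (h 0))) := fun ε hε =>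
    (L 0).sub_eq_apply_add_of_eq_apply_add (hv_eq ε hε) hhat_eq
  have hr : Tendsto (fun ε => nw ((L ε hhat - L 0 hhat) + (g ε - Lhat (h 0))))
      (nhdsWithin 0 (Set.Ioi 0)) (nhds 0) := by
    have hε : Tendsto (fun ε : ℝ => ε) (nhdsWithin 0 (Set.Ioi 0)) (nhds 0) :=
      tendsto_id.mono_left nhdsWithin_le_nhds
    refine squeeze_zero' (Eventually.of_forall fun ε => apply_nonneg _ _) ?_
      (by simpa using ((hε.const_mul C).mul_const (ns hhat)).add h4)
    filter_upwards [self_mem_nhdsWithin] with ε hε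
    exact (map_add_le_add nw _ _).trans (add_le_add (h2 ε hε hhat) (hws _))
  have hM : ∀ᶠ ε in nhdsWithin (0:ℝ) (Set.Ioi 0),
      ns (v ε - hhat) ≤ C1 * (1 - ρ)⁻¹ * (ns (Lhat (h 0)) + 1) + ns hhat := by
    filter_upwards [self_mem_nhdsWithin, h4.eventually (ge_mem_nhds one_pos)] with ε hε hgε
    calc ns (v ε - hhat) ≤ ns (v ε) + ns hhat := map_sub_le_add ns _ _
      _ ≤ C1 * (1 - ρ)⁻¹ * ns (g ε) + ns hhat := by
        gcongr
        exact ns.apply_le_of_eq_apply_add hC1.le hρ0.le hρ1 (hcontr ε hε) (hv_mem ε hε)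
          (hg_mem ε hε) (hv_eq ε hε)
      _ ≤ C1 * (1 - ρ)⁻¹ * (ns (Lhat (h 0)) + 1) + ns hhat := by
        gcongr
        exact (le_map_add_map_sub ns _ (Lhat (h 0))).trans (add_le_add_right hgε _)
  exact nw.tendsto_zero_of_eq_apply_add ns hws hC1.le hρ0.le hρ1
    (eventually_nhdsWithin_of_forall fun ε hε => h1 ε (le_of_lt hε))
    (eventually_nhdsWithin_of_forall hcontr)
    (eventually_nhdsWithin_of_forall fun ε hε => sub_mem (hv_mem ε hε) hhat0)
    (eventually_nhdsWithin_of_forall hw_eq) hM hr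

/-- abstract linear response.  `X` is a space of (signed) measures
carrying three norms `nw ≤ ns ≤ nss`, `mass v` plays the role of `v(X)`, and
`L ε` is a family of Markov operators with unique fixed points `h ε` of mass one.
Under (1) uniform weak boundedness of the powers, (2) `‖L_ε - L‖_{s→w} ≤ Cε`,
(3) uniform contraction of the powers on the zero-mass space `V_s⁰`, and
(4) existence of a derivative operator `L̂` with `ε⁻¹(L - L_ε)h → L̂h` in `ns`,
the element `ĥ = (Id - L)⁻¹ L̂ h` (characterised by `ĥ - Lĥ = L̂h`, `mass ĥ = 0`)
satisfies `‖ε⁻¹(h - h_ε) - ĥ‖_w → 0` as `ε → 0⁺`. -/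
theorem stmt6
    {X : Type*} [AddCommGroup X] [Module ℝ X]
    (nw ns nss : Seminorm ℝ X)
    (hws : ∀ x, nw x ≤ ns x) (hsss : ∀ x, ns x ≤ nss x)
    (mass : X →ₗ[ℝ] ℝ)
    (L : ℝ → Module.End ℝ X)
    (h : ℝ → X)
    (hmarkov : ∀ ε ≥ (0:ℝ), ∀ x, mass (L ε x) = mass x)
    (hfix : ∀ ε ≥ (0:ℝ), L ε (h ε) = h ε ∧ mass (h ε) = 1)
    (huniq : ∀ ε ≥ (0:ℝ), ∀ y, L ε y = y → mass y = 1 → y = h ε)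
    (K : ℝ) (h1 : ∀ ε ≥ (0:ℝ), ∀ k : ℕ, ∀ x, nw ((L ε ^ k) x) ≤ K * nw x)
    (C : ℝ) (h2 : ∀ ε > (0:ℝ), ∀ x, nw (L ε x - L 0 x) ≤ C * ε * ns x)
    (C1 ρ : ℝ) (hC1 : 0 < C1) (hρ0 : 0 < ρ) (hρ1 : ρ < 1)
    (h3 : ∀ ε ≥ (0:ℝ), ∀ n : ℕ, ∀ v, mass v = 0 → ns ((L ε ^ n) v) ≤ C1 * ρ ^ n * ns v)
    (Lhat : X →ₗ[ℝ] X)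
    (h4 : Tendsto (fun ε : ℝ => ns (ε⁻¹ • (L 0 (h 0) - L ε (h 0)) - Lhat (h 0)))
      (nhdsWithin 0 (Set.Ioi 0)) (nhds 0))
    (hhat : X)
    (hhat_def : hhat - L 0 hhat = Lhat (h 0)) (hhat0 : mass hhat = 0) :
    Tendsto (fun ε : ℝ => nw (ε⁻¹ • (h 0 - h ε) - hhat))
      (nhdsWithin 0 (Set.Ioi 0)) (nhds 0) :=
  stmt6_general nw ns hws mass L h hmarkov hfix K h1 C h2 C1 ρ hC1 hρ0 hρ1 h3 Lhat h4 hhat hhat_def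
    hhat0
end

section
/- Approximation theorem for the response: suppose L satisfies the assumptions of the abstract linear response proposition, f_η ∈ V_s^0 is a family with ‖f_η‖_s uniformly bounded and ‖f_η − L̂h‖_w → 0 as η → 0, L_η is a finite-rank operator with ‖L_η − L‖_{B_s→B_w} ≤ Cη and the L_η are uniformly bounded in the strong norm. Then for every τ > 0 there exist η > 0 and l* ∈ ℕ such that ‖(Id − L)^{-1} L̂ h − Σ_{k=0}^{l*-1} L_η^k f_η‖_w < τ. -/
open Filter

/-- Seminorm of a finite sum is at most the sum of seminorms. -/
lemma my_seminorm_sum_le {X : Type*} [AddCommGroup X] [Module ℝ X]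
    (p : Seminorm ℝ X) (n : ℕ) (g : ℕ → X) :
    p (∑ i ∈ Finset.range n, g i) ≤ ∑ i ∈ Finset.range n, p (g i) := by
  induction n with
  | zero => simp
  | succ n ih =>
    rw [Finset.sum_range_succ, Finset.sum_range_succ]
    exact le_trans (map_add_le_add p _ _) (by linarith)

/-- Telescoping: `∑_{k<l} L^k (h - Lh) = h - L^l h`. -/
lemma my_telescope {X : Type*} [AddCommGroup X] [Module ℝ X]
    (L : Module.End ℝ X) (h : X) (l : ℕ) :
    ∑ k ∈ Finset.range l, (L^k) (h - L h) = h - (L^l) h := by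
  have key := Finset.sum_range_sub' (f := fun k => (L^k) h) (n := l)
  simp only [pow_zero, Module.End.one_apply] at key
  rw [← key]
  refine Finset.sum_congr rfl fun k _ => ?_
  rw [map_sub, pow_succ, Module.End.mul_apply]

/-- Telescoping for the difference of powers of two operators. -/
lemma my_pow_diff {X : Type*} [AddCommGroup X] [Module ℝ X]
    (L A : Module.End ℝ X) (x : X) (k : ℕ) :
    (L^k) x - (A^k) x
      = ∑ j ∈ Finset.range k, ((L^(j+1)) ((A^(k-1-j)) x) - (L^j) ((A^(k-j)) x)) := by
  have key := Finset.sum_range_sub (f := fun j => (L^j) ((A^(k-j)) x)) (n := k)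
  simp only [Nat.sub_self, pow_zero, Module.End.one_apply, Nat.sub_zero] at key
  rw [← key]
  refine Finset.sum_congr rfl fun j hj => ?_
  have h1 : k - (j+1) = k - 1 - j := by omega
  rw [h1]

/-- Powers of an operator with strong bound `K` have strong bound `K^m`. -/
lemma my_pow_ns_bound {X : Type*} [AddCommGroup X] [Module ℝ X]
    (ns : Seminorm ℝ X) (A : Module.End ℝ X) (K : ℝ) (hK0 : 0 ≤ K)
    (hA : ∀ x, ns (A x) ≤ K * ns x) : ∀ m x, ns ((A^m) x) ≤ K^m * ns x := by
  intro m
  induction m with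
  | zero => intro x; simp
  | succ m ih =>
    intro x
    rw [pow_succ', Module.End.mul_apply]
    calc ns (A ((A^m) x)) ≤ K * ns ((A^m) x) := hA _
      _ ≤ K * (K^m * ns x) := mul_le_mul_of_nonneg_left (ih x) hK0
      _ = K^(m+1) * ns x := by ring

set_option maxHeartbeats 1000000 in
/-- approximation theorem for the response.  `L` satisfies the
assumptions of the abstract linear response proposition (uniform weak bound on
powers, uniform contraction of powers on the zero-average space); `L̂h` is a
zero-average element with `ĥ - Lĥ = L̂h`, `mass ĥ = 0` (i.e. `ĥ = (Id-L)⁻¹L̂h`);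
`f_η` is a family of zero-average elements, uniformly bounded in the strong norm,
converging weakly to `L̂h`; `L_η` are finite-rank (here: arbitrary) operators
with `‖L_η - L‖_{s→w} ≤ Cη`, uniformly bounded in the strong norm.  Then for
every `τ > 0` there are `η > 0` and `l* ∈ ℕ` with
`‖ĥ - Σ_{k<l*} L_η^k f_η‖_w < τ`. -/
theorem stmt8
    {X : Type*} [AddCommGroup X] [Module ℝ X]
    (nw ns : Seminorm ℝ X) (hws : ∀ x, nw x ≤ ns x)
    (mass : X →ₗ[ℝ] ℝ)
    (L : Module.End ℝ X) (hinv : ∀ x, mass (L x) = mass x)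
    (M : ℝ) (hM : ∀ k : ℕ, ∀ x, nw ((L ^ k) x) ≤ M * nw x)
    (C1 ρ : ℝ) (hC1 : 0 < C1) (hρ0 : 0 < ρ) (hρ1 : ρ < 1)
    (hcontr : ∀ n : ℕ, ∀ v, mass v = 0 → ns ((L ^ n) v) ≤ C1 * ρ ^ n * ns v)
    (Lhath hhat : X) (hLhath : mass Lhath = 0)
    (hhat_def : hhat - L hhat = Lhath) (hhat0 : mass hhat = 0)
    (f : ℝ → X) (hf0 : ∀ η > (0:ℝ), mass (f η) = 0)
    (Kf : ℝ) (hfb : ∀ η > (0:ℝ), ns (f η) ≤ Kf)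
    (hfconv : Tendsto (fun η : ℝ => nw (f η - Lhath))
      (nhdsWithin 0 (Set.Ioi 0)) (nhds 0))
    (Lop : ℝ → Module.End ℝ X) (C : ℝ)
    (happrox : ∀ η > (0:ℝ), ∀ x, nw (Lop η x - L x) ≤ C * η * ns x)
    (Ks : ℝ) (hstrong : ∀ η > (0:ℝ), ∀ x, ns (Lop η x) ≤ Ks * ns x) :
    ∀ τ > (0:ℝ), ∃ η > (0:ℝ), ∃ l : ℕ,
      nw (hhat - ∑ k ∈ Finset.range l, (Lop η ^ k) (f η)) < τ := by
  intro τ hτ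
  set M' := max M 1 with hM'def
  have hM'1 : (1:ℝ) ≤ M' := le_max_right _ _
  have hM'0 : (0:ℝ) ≤ M' := by linarith
  have hMle : M ≤ M' := le_max_left _ _
  set Ks' := max Ks 1 with hKs'def
  have hKs'1 : (1:ℝ) ≤ Ks' := le_max_right _ _
  have hKs'0 : (0:ℝ) ≤ Ks' := by linarith
  have hKsle : Ks ≤ Ks' := le_max_left _ _
  set C' := max C 0 with hC'def
  have hC'0 : (0:ℝ) ≤ C' := le_max_right _ _
  have hCle : C ≤ C' := le_max_left _ _
  set Kf' := max Kf 0 with hKf'def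
  have hKf'0 : (0:ℝ) ≤ Kf' := le_max_right _ _
  have hKfle : Kf ≤ Kf' := le_max_left _ _
  have hMw : ∀ (k : ℕ) x, nw ((L^k) x) ≤ M' * nw x :=
    fun k x => (hM k x).trans (mul_le_mul_of_nonneg_right hMle (apply_nonneg nw x))
  -- Step 1: choose l with (C1 * ns hhat) * ρ^l < τ/3
  have htend : Tendsto (fun n : ℕ => (C1 * ns hhat) * ρ ^ n) atTop (nhds 0) := by
    simpa using (tendsto_pow_atTop_nhds_zero_of_lt_one hρ0.le hρ1).const_mul (C1 * ns hhat)
  obtain ⟨l, hl⟩ := (htend.eventually (gt_mem_nhds (by linarith : (0:ℝ) < τ/3))).exists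
  -- constants
  set a : ℝ := (l:ℝ) * M' with ha_def
  have ha0 : 0 ≤ a := mul_nonneg (Nat.cast_nonneg _) hM'0
  set c1 : ℝ := τ / (3 * (a + 1)) with hc1_def
  have hc1pos : 0 < c1 := by positivity
  have hc1eq : c1 * (3 * (a + 1)) = τ := div_mul_cancel₀ _ (by positivity)
  set D : ℝ := (l:ℝ) * ((l:ℝ) * (M' * (C' * (Ks'^l * Kf')))) with hD_def
  have hD0 : 0 ≤ D := by positivity
  set c2 : ℝ := τ / (3 * (D + 1)) with hc2_def
  have hc2pos : 0 < c2 := by positivity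
  have hc2eq : c2 * (3 * (D + 1)) = τ := div_mul_cancel₀ _ (by positivity)
  -- Step 2: choose η
  have hev1 : ∀ᶠ η in nhdsWithin (0:ℝ) (Set.Ioi 0), nw (f η - Lhath) < c1 :=
    hfconv.eventually (gt_mem_nhds hc1pos)
  have hev2 : ∀ᶠ η in nhdsWithin (0:ℝ) (Set.Ioi 0), η < c2 :=
    eventually_nhdsWithin_of_eventually_nhds (eventually_lt_nhds hc2pos)
  have hev3 : ∀ᶠ η in nhdsWithin (0:ℝ) (Set.Ioi 0), η ∈ Set.Ioi (0:ℝ) :=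
    eventually_mem_nhdsWithin
  obtain ⟨η, ⟨h1, h2⟩, hηmem⟩ := ((hev1.and hev2).and hev3).exists
  have hηpos : 0 < η := hηmem
  refine ⟨η, hηpos, l, ?_⟩
  set A := Lop η with hA_def
  set g := f η with hg_def
  have hnsg : ns g ≤ Kf' := (hfb η hηpos).trans hKfle
  have hApow : ∀ (m : ℕ) x, ns ((A^m) x) ≤ Ks'^m * ns x :=
    my_pow_ns_bound ns A Ks' hKs'0 fun x =>
      (hstrong η hηpos x).trans (mul_le_mul_of_nonneg_right hKsle (apply_nonneg ns x))
  -- decomposition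
  have htele : ∑ k ∈ Finset.range l, (L^k) Lhath = hhat - (L^l) hhat := by
    rw [← hhat_def]; exact my_telescope L hhat l
  have hdecomp : hhat - ∑ k ∈ Finset.range l, (A^k) g
      = (L^l) hhat + ∑ k ∈ Finset.range l, ((L^k) Lhath - (L^k) g)
        + ∑ k ∈ Finset.range l, ((L^k) g - (A^k) g) := by
    rw [Finset.sum_sub_distrib, Finset.sum_sub_distrib, htele]
    abel
  -- bound 1
  have hb1 : nw ((L^l) hhat) < τ / 3 := by
    have := (hws _).trans (hcontr l hhat hhat0)
    calc nw ((L^l) hhat) ≤ C1 * ρ^l * ns hhat := this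
      _ = (C1 * ns hhat) * ρ^l := by ring
      _ < τ / 3 := hl
  -- bound 2
  have hb2 : nw (∑ k ∈ Finset.range l, ((L^k) Lhath - (L^k) g)) < τ / 3 := by
    have hterm : ∀ k ∈ Finset.range l, nw ((L^k) Lhath - (L^k) g) ≤ M' * nw (g - Lhath) := by
      intro k _
      have : (L^k) Lhath - (L^k) g = (L^k) (Lhath - g) := (map_sub _ _ _).symm
      rw [this]
      calc nw ((L^k) (Lhath - g)) ≤ M' * nw (Lhath - g) := hMw k _
        _ = M' * nw (g - Lhath) := by rw [map_sub_rev]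
    have hsum : nw (∑ k ∈ Finset.range l, ((L^k) Lhath - (L^k) g))
        ≤ (l:ℝ) * (M' * nw (g - Lhath)) := by
      calc nw (∑ k ∈ Finset.range l, ((L^k) Lhath - (L^k) g))
          ≤ ∑ k ∈ Finset.range l, nw ((L^k) Lhath - (L^k) g) :=
            my_seminorm_sum_le nw l _
        _ ≤ ∑ _k ∈ Finset.range l, M' * nw (g - Lhath) := Finset.sum_le_sum hterm
        _ = (l:ℝ) * (M' * nw (g - Lhath)) := by
            rw [Finset.sum_const, Finset.card_range, nsmul_eq_mul]
    have hle : (l:ℝ) * (M' * nw (g - Lhath)) ≤ a * c1 := by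
      rw [ha_def, mul_assoc]
      exact mul_le_mul_of_nonneg_left (mul_le_mul_of_nonneg_left h1.le hM'0)
        (Nat.cast_nonneg _)
    have hfin : a * c1 < τ / 3 := by nlinarith [hc1eq, hc1pos]
    linarith
  -- bound 3
  have hb3 : nw (∑ k ∈ Finset.range l, ((L^k) g - (A^k) g)) < τ / 3 := by
    set B : ℝ := M' * (C' * (Ks'^l * Kf')) * η with hB_def
    have hB0 : 0 ≤ B := by positivity
    have hterm : ∀ k ∈ Finset.range l, nw ((L^k) g - (A^k) g) ≤ (l:ℝ) * B := by
      intro k hk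
      have hkl : k ≤ l := (Finset.mem_range.mp hk).le
      rw [my_pow_diff L A g k]
      have hj : ∀ j ∈ Finset.range k,
          nw ((L^(j+1)) ((A^(k-1-j)) g) - (L^j) ((A^(k-j)) g)) ≤ B := by
        intro j hjk
        have hjk' : j < k := Finset.mem_range.mp hjk
        set y := (A^(k-1-j)) g with hy_def
        have hkj : k - j = (k-1-j) + 1 := by omega
        have heq : (L^(j+1)) ((A^(k-1-j)) g) - (L^j) ((A^(k-j)) g) = (L^j) (L y - A y) := by
          rw [hkj, pow_succ (L) j, pow_succ' A (k-1-j), Module.End.mul_apply,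
            Module.End.mul_apply, map_sub]
        rw [heq]
        have hnsy : ns y ≤ Ks'^l * Kf' := by
          calc ns y ≤ Ks'^(k-1-j) * ns g := hApow _ _
            _ ≤ Ks'^l * Kf' := by
                have hp : Ks'^(k-1-j) ≤ Ks'^l :=
                  pow_le_pow_right₀ hKs'1 (by omega)
                exact mul_le_mul hp hnsg (apply_nonneg ns g) (by positivity)
        calc nw ((L^j) (L y - A y)) ≤ M' * nw (L y - A y) := hMw j _
          _ = M' * nw (A y - L y) := by rw [map_sub_rev]
          _ ≤ M' * (C * η * ns y) :=
              mul_le_mul_of_nonneg_left (happrox η hηpos y) hM'0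
          _ ≤ M' * (C' * η * (Ks'^l * Kf')) := by
              refine mul_le_mul_of_nonneg_left ?_ hM'0
              exact mul_le_mul (mul_le_mul_of_nonneg_right hCle hηpos.le) hnsy
                (apply_nonneg ns y) (by positivity)
          _ = B := by rw [hB_def]; ring
      calc nw (∑ j ∈ Finset.range k, ((L^(j+1)) ((A^(k-1-j)) g) - (L^j) ((A^(k-j)) g)))
          ≤ ∑ j ∈ Finset.range k, nw ((L^(j+1)) ((A^(k-1-j)) g) - (L^j) ((A^(k-j)) g)) :=
            my_seminorm_sum_le nw k _
        _ ≤ ∑ _j ∈ Finset.range k, B := Finset.sum_le_sum hj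
        _ = (k:ℝ) * B := by rw [Finset.sum_const, Finset.card_range, nsmul_eq_mul]
        _ ≤ (l:ℝ) * B := mul_le_mul_of_nonneg_right (by exact_mod_cast hkl) hB0
    have hsum : nw (∑ k ∈ Finset.range l, ((L^k) g - (A^k) g)) ≤ D * η := by
      calc nw (∑ k ∈ Finset.range l, ((L^k) g - (A^k) g))
          ≤ ∑ k ∈ Finset.range l, nw ((L^k) g - (A^k) g) := my_seminorm_sum_le nw l _
        _ ≤ ∑ _k ∈ Finset.range l, (l:ℝ) * B := Finset.sum_le_sum hterm
        _ = (l:ℝ) * ((l:ℝ) * B) := by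
            rw [Finset.sum_const, Finset.card_range, nsmul_eq_mul]
        _ = D * η := by rw [hD_def, hB_def]; ring
    have hle : D * η ≤ D * c2 := mul_le_mul_of_nonneg_left h2.le hD0
    have hfin : D * c2 < τ / 3 := by nlinarith [hc2eq, hc2pos]
    linarith
  -- combine
  calc nw (hhat - ∑ k ∈ Finset.range l, (A^k) g)
      = nw ((L^l) hhat + ∑ k ∈ Finset.range l, ((L^k) Lhath - (L^k) g)
          + ∑ k ∈ Finset.range l, ((L^k) g - (A^k) g)) := by rw [hdecomp]
    _ ≤ nw ((L^l) hhat + ∑ k ∈ Finset.range l, ((L^k) Lhath - (L^k) g))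
        + nw (∑ k ∈ Finset.range l, ((L^k) g - (A^k) g)) := map_add_le_add nw _ _
    _ ≤ nw ((L^l) hhat) + nw (∑ k ∈ Finset.range l, ((L^k) Lhath - (L^k) g))
        + nw (∑ k ∈ Finset.range l, ((L^k) g - (A^k) g)) := by
          have := map_add_le_add nw ((L^l) hhat)
            (∑ k ∈ Finset.range l, ((L^k) Lhath - (L^k) g))
          linarith
    _ < τ / 3 + τ / 3 + τ / 3 := by linarith
    _ = τ := by ring
end

section
/- Explicit error decomposition: with M = sup_k ‖L^k‖_{B_w→B_w}, for any l* ∈ ℕ, any f_η and any finite-rank L_η one has ‖(Id−L)^{-1}L̂h − Σ_{k=0}^{l*-1} L_η^k f_η‖_w ≤ ‖Σ_{k=l*}^∞ L^k L̂h‖_w + M ‖L − L_η‖_{B_s→B_w} Σ_{k=0}^{l*-1} Σ_{j=0}^{k-1} ‖L_η^{k-1-j} f_η‖_s + M l* ‖L̂h − f_η‖_w. -/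
/-- explicit error decomposition.  On a Banach space whose norm is
the weak norm, with a strong seminorm `ns ≥ ‖·‖`, `M = sup_k ‖L^k‖_{w→w}`,
`‖(L - L_η)x‖_w ≤ CL·ns x`, and `v = L̂h` with summable Neumann series, one has
for every `l*`:
`‖Σ_{k≥0} L^k v - Σ_{k<l*} L_η^k f_η‖_w ≤ ‖Σ_{k≥l*} L^k v‖_w
  + M·‖L-L_η‖_{s→w}·Σ_{k<l*}Σ_{j<k} ‖L_η^{k-1-j} f_η‖_s + M·l*·‖v - f_η‖_w`. -/
theorem stmt9
    {X : Type*} [NormedAddCommGroup X] [NormedSpace ℝ X] [CompleteSpace X]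
    (ns : Seminorm ℝ X) (hws : ∀ x, ‖x‖ ≤ ns x)
    (L Lη : Module.End ℝ X)
    (M : ℝ) (hM : ∀ k : ℕ, ∀ x, ‖(L ^ k) x‖ ≤ M * ‖x‖)
    (CL : ℝ) (hCL : ∀ x, ‖L x - Lη x‖ ≤ CL * ns x)
    (v fη : X)
    (hsum : Summable fun k : ℕ => (L ^ k) v) :
    ∀ l : ℕ,
      ‖(∑' k : ℕ, (L ^ k) v) - ∑ k ∈ Finset.range l, (Lη ^ k) fη‖
        ≤ ‖∑' k : ℕ, (L ^ (k + l)) v‖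
          + M * CL *
              ∑ k ∈ Finset.range l, ∑ jdx ∈ Finset.range k, ns ((Lη ^ (k - 1 - jdx)) fη)
          + M * l * ‖v - fη‖ := by
  intro l
  by_cases hM0 : 0 ≤ M
  swap
  · -- degenerate case: M < 0 forces the space to be trivial
    push_neg at hM0
    have hx : ∀ x : X, x = 0 := by
      intro x
      have h0 := hM 0 x
      simp only [pow_zero, Module.End.one_apply] at h0
      have : M * ‖x‖ ≤ 0 := mul_nonpos_of_nonpos_of_nonneg hM0.le (norm_nonneg x)
      exact norm_le_zero_iff.mp (h0.trans this)
    simp only [hx]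
    simp [map_zero]
  -- telescoping identity
  have key : ∀ k : ℕ, (L ^ k) fη - (Lη ^ k) fη
      = ∑ j ∈ Finset.range k,
          (L ^ j) (L ((Lη ^ (k - 1 - j)) fη) - Lη ((Lη ^ (k - 1 - j)) fη)) := by
    intro k
    induction k with
    | zero => simp
    | succ n ih =>
      rw [Finset.sum_range_succ']
      have hexp : ∀ j : ℕ, n + 1 - 1 - (j + 1) = n - 1 - j := by omega
      have hexp0 : n + 1 - 1 - 0 = n := by omega
      simp only [hexp, hexp0, pow_succ', Module.End.mul_apply, pow_zero,
        Module.End.one_apply]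
      rw [← map_sum L, ← ih]
      simp only [map_sub]
      abel
  rw [← Summable.sum_add_tsum_nat_add l hsum]
  have h1 : (∑ k ∈ Finset.range l, (L ^ k) v + ∑' k : ℕ, (L ^ (k + l)) v)
      - ∑ k ∈ Finset.range l, (Lη ^ k) fη
      = (∑' k : ℕ, (L ^ (k + l)) v)
        + ∑ k ∈ Finset.range l, ((L ^ k) v - (Lη ^ k) fη) := by
    rw [Finset.sum_sub_distrib]
    abel
  rw [h1]
  refine (norm_add_le _ _).trans ?_
  rw [add_assoc]
  gcongr
  have h2 : ∀ k ∈ Finset.range l, ‖(L ^ k) v - (Lη ^ k) fη‖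
      ≤ M * CL * ∑ j ∈ Finset.range k, ns ((Lη ^ (k - 1 - j)) fη) + M * ‖v - fη‖ := by
    intro k _
    have hdec : (L ^ k) v - (Lη ^ k) fη
        = ((L ^ k) fη - (Lη ^ k) fη) + (L ^ k) (v - fη) := by
      rw [map_sub]; abel
    rw [hdec]
    refine (norm_add_le _ _).trans (add_le_add ?_ (hM k _))
    rw [key k]
    refine (norm_sum_le _ _).trans ?_
    rw [Finset.mul_sum]
    refine Finset.sum_le_sum fun j _ => ?_
    calc ‖(L ^ j) (L ((Lη ^ (k - 1 - j)) fη) - Lη ((Lη ^ (k - 1 - j)) fη))‖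
        ≤ M * ‖L ((Lη ^ (k - 1 - j)) fη) - Lη ((Lη ^ (k - 1 - j)) fη)‖ := hM j _
      _ ≤ M * (CL * ns ((Lη ^ (k - 1 - j)) fη)) :=
          mul_le_mul_of_nonneg_left (hCL _) hM0
      _ = M * CL * ns ((Lη ^ (k - 1 - j)) fη) := by ring
  calc ‖∑ k ∈ Finset.range l, ((L ^ k) v - (Lη ^ k) fη)‖
      ≤ ∑ k ∈ Finset.range l,
          (M * CL * ∑ j ∈ Finset.range k, ns ((Lη ^ (k - 1 - j)) fη) + M * ‖v - fη‖) :=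
        (norm_sum_le _ _).trans (Finset.sum_le_sum h2)
    _ = M * CL * ∑ k ∈ Finset.range l, ∑ j ∈ Finset.range k, ns ((Lη ^ (k - 1 - j)) fη)
        + M * l * ‖v - fη‖ := by
        rw [Finset.sum_add_distrib, ← Finset.mul_sum, Finset.sum_const,
          Finset.card_range, nsmul_eq_mul]
        ring
end

section
/- Let Π_η (η = 1/m, m > 2) be the projection Π_η f = Σ_i f(a_i) φ_i + (∫f dm − Σ_i f(a_i)∫φ_i dm) κ, where κ = 2 Σ_{j=0}^{m-1} φ̃_{2j+1} is built from the partition of unity of mesh 1/(2m), so that κ(a_i)=0, ∫κ = 1, ‖κ‖_∞ = 2, ‖κ'‖_∞ = 3m. Then for f ∈ C^1([0,1]): (1) ‖Π_η f‖_∞ ≤ 5‖f‖_∞; (2) ‖Π_η f‖_∞ ≤ ‖f‖_∞ + 2‖f'‖_∞/m; (3) ‖Π_η f‖_{C^1} ≤ (11/2)‖f‖_{C^1}; (4) ‖Π_η f − f‖_∞ ≤ 3‖f'‖_∞/m. Moreover ∫ Π_η f dm = ∫ f dm. -/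
/-!
Fix a cell `[k/m, (k+1)/m]` and write `m x = k + t` with `t ∈ [0,1]`. Only the two hat functions
of its endpoints are nonzero there, and `φ t + φ (t-1) = 1`, so the cubic interpolant `I f` is a
convex combination of `f (k/m)` and `f ((k+1)/m)`; its error is at most `‖f'‖ / (2m)` because
`t φ t + (1-t) φ (t-1) ≤ 1/2`, and its derivative `m (f (k/m) - f ((k+1)/m)) φ' t` is at most
`(3/2) ‖f'‖`. On the same cell `κ x = 2 φ (2t-1)`, so `|κ| ≤ 2` and `|κ'| ≤ 6m`, while `∫ κ = 1`.
Hence `Π f = I f + c κ` with `c = ∫ (f - I f)`, which is bounded both by `2 ‖f‖` and by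
`‖f'‖ / (2m)`; the four estimates follow, and `∫ κ = 1` makes `Π` preserve the integral.
-/

open Set Filter Topology
open scoped NNReal

/-- Outside the closed set `s` the conclusion is vacuous, so a function that is piecewise smooth
on finitely many closed pieces covering `ℝ` is differentiable wherever the pieces' derivatives
agree. -/
lemma hasDerivWithinAt_of_eqOn_of_isClosed {F F' p p' : ℝ → ℝ} {s : Set ℝ} (hs : IsClosed s)
    (hF : EqOn F p s) (hF' : EqOn F' p' s) (hp : ∀ x, HasDerivAt p (p' x) x) (x : ℝ) :
    HasDerivWithinAt F (F' x) s x := by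
  by_cases hx : x ∈ s
  · rw [hF' hx]
    exact (hp x).hasDerivWithinAt.congr hF (hF hx)
  · exact HasFDerivWithinAt.of_notMem_closure (by rwa [hs.closure_eq])

lemma hasDerivAt_cubicBump_piece (s x : ℝ) :
    HasDerivAt (fun y => 1 - 3 * y ^ 2 + 2 * s * y ^ 3) (-6 * x + 6 * s * x ^ 2) x := by
  refine ((((hasDerivAt_pow 2 x).const_mul 3).const_sub 1).fun_add
    ((hasDerivAt_pow 3 x).const_mul (2 * s))).congr_deriv ?_
  push_cast; ring

lemma LipschitzOnWith.abs_sub_le {f : ℝ → ℝ} {L : ℝ≥0} {s : Set ℝ} (hf : LipschitzOnWith L f s)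
    {y z : ℝ} (hy : y ∈ s) (hz : z ∈ s) : |f y - f z| ≤ L * |y - z| := by
  simpa only [Real.dist_eq] using hf.dist_le_mul y hy z hz

lemma abs_add_mul_le {a b c A B C : ℝ} (ha : |a| ≤ A) (hb : |b| ≤ B) (hc : |c| ≤ C) :
    |a + b * c| ≤ A + B * C :=
  calc |a + b * c| ≤ |a| + |b| * |c| := by rw [← abs_mul]; exact abs_add_le _ _
    _ ≤ A + B * C := add_le_add ha (mul_le_mul hb hc (abs_nonneg _) ((abs_nonneg _).trans hb))

lemma abs_integral_le_of_forall_mem_Icc {g : ℝ → ℝ} {C : ℝ}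
    (h : ∀ x ∈ Icc (0:ℝ) 1, |g x| ≤ C) : |∫ x in (0:ℝ)..1, g x| ≤ C := by
  have := intervalIntegral.norm_integral_le_of_norm_le_const (a := 0) (b := 1) (f := g)
    fun x hx => (Real.norm_eq_abs _).trans_le <|
      h x (Ioc_subset_Icc_self (by rwa [uIoc_of_le zero_le_one] at hx))
  simpa using this

lemma le_biSup_of_continuousOn {g : ℝ → ℝ} {s : Set ℝ} (hs : IsCompact s)
    (hg : ContinuousOn g s) {y : ℝ} (hy : y ∈ s) : g y ≤ ⨆ z ∈ s, g z :=
  le_ciSup₂ (f := fun z (_ : z ∈ s) => g z) ((hs.bddAbove_image hg).mono <| by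
    simp only [iUnion_subset_iff, range_subset_iff]
    exact fun z hz => mem_image_of_mem g hz) y hy

lemma Real.biSup_le {g : ℝ → ℝ} {s : Set ℝ} {a : ℝ} (h : ∀ y ∈ s, g y ≤ a) (ha : 0 ≤ a) :
    ⨆ y ∈ s, g y ≤ a :=
  Real.iSup_le (fun y => Real.iSup_le (h y) ha) ha

lemma ContDiff.lipschitzOnWith_Icc {f : ℝ → ℝ} (hf : ContDiff ℝ 1 f) (a b : ℝ) :
    LipschitzOnWith (⨆ y ∈ Icc a b, |deriv f y|).toNNReal f (Icc a b) := by
  refine (convex_Icc a b).lipschitzOnWith_of_nnnorm_deriv_le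
    (fun y _ => hf.differentiable one_ne_zero y) fun y hy => ?_
  have h := le_biSup_of_continuousOn isCompact_Icc (hf.continuous_deriv le_rfl).abs.continuousOn hy
  exact (Real.le_toNNReal_iff_coe_le ((abs_nonneg _).trans h)).2 h

/-- The hat function of the partition of unity: `φ_i x = cubicBump (m * x - i)`. -/
noncomputable def cubicBump (x : ℝ) : ℝ :=
  if x < -1 then 0
  else if x ≤ 0 then 1 - 3 * x ^ 2 - 2 * x ^ 3
  else if x ≤ 1 then 1 - 3 * x ^ 2 + 2 * x ^ 3
  else 0

noncomputable def cubicBumpDeriv (x : ℝ) : ℝ :=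
  if x < -1 then 0
  else if x ≤ 0 then -6 * x - 6 * x ^ 2
  else if x ≤ 1 then -6 * x + 6 * x ^ 2
  else 0

namespace cubicBump

lemma eq_zero {x : ℝ} (h : 1 ≤ |x|) : cubicBump x = 0 := by
  unfold cubicBump; rcases le_abs.mp h with h | h <;> split_ifs <;> nlinarith

lemma deriv_eq_zero {x : ℝ} (h : 1 ≤ |x|) : cubicBumpDeriv x = 0 := by
  unfold cubicBumpDeriv; rcases le_abs.mp h with h | h <;> split_ifs <;> nlinarith

lemma nonneg (x : ℝ) : 0 ≤ cubicBump x := by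
  unfold cubicBump
  split_ifs
  · exact le_rfl
  · nlinarith [mul_nonneg (sq_nonneg (x + 1)) (by linarith : (0:ℝ) ≤ 1 - 2 * x)]
  · nlinarith [mul_nonneg (sq_nonneg (x - 1)) (by linarith : (0:ℝ) ≤ 1 + 2 * x)]
  · exact le_rfl

lemma le_one (x : ℝ) : cubicBump x ≤ 1 := by
  unfold cubicBump; split_ifs <;> nlinarith

lemma abs_deriv_le (x : ℝ) : |cubicBumpDeriv x| ≤ 3 / 2 := by
  unfold cubicBumpDeriv
  rw [abs_le]
  split_ifs <;> constructor <;> nlinarith [sq_nonneg (2 * x + 1), sq_nonneg (2 * x - 1)]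

lemma add_sub_one {t : ℝ} (ht : t ∈ Icc (0:ℝ) 1) : cubicBump t + cubicBump (t - 1) = 1 := by
  obtain ⟨h0, h1⟩ := ht
  unfold cubicBump; split_ifs <;> nlinarith

lemma deriv_add_sub_one {t : ℝ} (ht : t ∈ Icc (0:ℝ) 1) :
    cubicBumpDeriv t + cubicBumpDeriv (t - 1) = 0 := by
  obtain ⟨h0, h1⟩ := ht
  unfold cubicBumpDeriv; split_ifs <;> nlinarith

lemma mul_add_mul_le {t : ℝ} (ht : t ∈ Icc (0:ℝ) 1) :
    t * cubicBump t + (1 - t) * cubicBump (t - 1) ≤ 1 / 2 := by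
  obtain ⟨h0, h1⟩ := ht
  unfold cubicBump
  split_ifs <;> nlinarith [sq_nonneg (2 * t - 1), mul_nonneg h0 (sub_nonneg.2 h1)]

lemma abs_mul_add_mul_le {a b A B : ℝ} (ha : |a| ≤ A) (hb : |b| ≤ B) (t : ℝ) :
    |a * cubicBump t + b * cubicBump (t - 1)| ≤ A * cubicBump t + B * cubicBump (t - 1) := by
  refine (abs_add_le _ _).trans ?_
  rw [abs_mul, abs_mul, abs_of_nonneg (nonneg _), abs_of_nonneg (nonneg _)]
  exact add_le_add (mul_le_mul_of_nonneg_right ha (nonneg _))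
    (mul_le_mul_of_nonneg_right hb (nonneg _))

theorem _root_.hasDerivAt_cubicBump (x : ℝ) : HasDerivAt cubicBump (cubicBumpDeriv x) x := by
  have cover : Iic (-1) ∪ Icc (-1) 0 ∪ Icc 0 1 ∪ Ici 1 ∈ 𝓝 x := by
    refine univ_mem' fun y => ?_
    simp only [mem_union, mem_Iic, mem_Icc, mem_Ici]
    grind
  refine HasDerivWithinAt.hasDerivAt ?_ cover
  refine (((hasDerivWithinAt_of_eqOn_of_isClosed isClosed_Iic (p := fun _ => 0) ?_ ?_
      (fun y => hasDerivAt_const y 0) x).union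
    (hasDerivWithinAt_of_eqOn_of_isClosed isClosed_Icc ?_ ?_
      (hasDerivAt_cubicBump_piece (-1)) x)).union
    (hasDerivWithinAt_of_eqOn_of_isClosed isClosed_Icc ?_ ?_
      (hasDerivAt_cubicBump_piece 1) x)).union
    (hasDerivWithinAt_of_eqOn_of_isClosed isClosed_Ici (p := fun _ => 0) ?_ ?_
      (fun y => hasDerivAt_const y 0) x)
  all_goals
    intro y hy
    simp only [mem_Iic, mem_Icc, mem_Ici] at hy
    simp only [cubicBump, cubicBumpDeriv]
    split_ifs <;> nlinarith

lemma continuous : Continuous cubicBump :=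
  continuous_iff_continuousAt.2 fun x => (hasDerivAt_cubicBump x).continuousAt

lemma support_subset : Function.support cubicBump ⊆ Ioo (-1) 1 := by
  intro x hx
  by_contra h
  rw [mem_Ioo, not_and_or, not_lt, not_lt] at h
  refine hx (eq_zero ?_)
  rcases h with h | h
  · exact le_abs.2 (.inr (by linarith))
  · exact le_abs.2 (.inl h)

lemma integral_eq_one : ∫ x in (-1:ℝ)..1, cubicBump x = 1 := by
  rw [← intervalIntegral.integral_add_adjacent_intervals (b := 0)
    (continuous.intervalIntegrable _ _) (continuous.intervalIntegrable _ _)]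
  rw [intervalIntegral.integral_congr (g := fun x => 1 - 3 * x ^ 2 - 2 * x ^ 3),
    intervalIntegral.integral_congr (a := 0) (g := fun x => 1 - 3 * x ^ 2 + 2 * x ^ 3)]
  · rw [intervalIntegral.integral_sub, intervalIntegral.integral_sub,
      intervalIntegral.integral_add, intervalIntegral.integral_sub]
    · norm_num [integral_pow]
    all_goals exact Continuous.intervalIntegrable (by fun_prop) _ _
  all_goals
    intro x hx
    rw [uIcc_of_le (by norm_num)] at hx
    obtain ⟨h0, h1⟩ := hx
    simp only [cubicBump]
    split_ifs <;> nlinarith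

lemma integral_of_le {a b : ℝ} (ha : a ≤ -1) (hb : 1 ≤ b) : ∫ x in a..b, cubicBump x = 1 := by
  rw [intervalIntegral.integral_eq_integral_of_support_subset
    (support_subset.trans (Ioo_subset_Ioc_self.trans (Ioc_subset_Ioc ha hb))),
    ← integral_eq_one, intervalIntegral.integral_eq_integral_of_support_subset
    (support_subset.trans Ioo_subset_Ioc_self)]

end cubicBump

lemma hasDerivAt_cubicBump_affine (a b x : ℝ) :
    HasDerivAt (fun y => cubicBump (a * y - b)) (a * cubicBumpDeriv (a * x - b)) x := by
  have hin : HasDerivAt (fun y => a * y - b) a x := by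
    simpa using ((hasDerivAt_id x).const_mul a).sub_const b
  exact ((hasDerivAt_cubicBump _).comp x hin).congr_deriv (mul_comm _ _)

lemma exists_mul_eq_natCast_add {m : ℕ} (hm : 0 < m) {x : ℝ} (hx : x ∈ Icc (0:ℝ) 1) :
    ∃ k < m, ∃ t ∈ Icc (0:ℝ) 1, (m:ℝ) * x = k + t := by
  have hmx : 0 ≤ (m:ℝ) * x := mul_nonneg m.cast_nonneg hx.1
  rcases hx.2.eq_or_lt with rfl | hx₁
  · exact ⟨m - 1, by omega, 1, right_mem_Icc.2 zero_le_one, by rw [Nat.cast_sub hm]; ring⟩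
  · refine ⟨⌊(m:ℝ) * x⌋₊, (Nat.floor_lt hmx).2 ?_, _, ⟨?_, ?_⟩, (add_sub_cancel _ _).symm⟩
    · nlinarith [(Nat.cast_pos.2 hm : (0:ℝ) < m)]
    · linarith [Nat.floor_le hmx]
    · linarith [Nat.lt_floor_add_one ((m:ℝ) * x)]

lemma natCast_div_mem_Icc {i m : ℕ} (hi : i ≤ m) : (i / m : ℝ) ∈ Icc (0:ℝ) 1 :=
  ⟨by positivity, div_le_one_of_le₀ (by exact_mod_cast hi) m.cast_nonneg⟩

lemma sum_mul_sub_eq_of_vanishing {g : ℝ → ℝ} (hg : ∀ y, 1 ≤ |y| → g y = 0) (a : ℕ → ℝ)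
    {m k : ℕ} (hk : k < m) {t : ℝ} (ht : t ∈ Icc (0:ℝ) 1) {u : ℝ} (hu : u = k + t) :
    ∑ i ∈ Finset.range (m + 1), a i * g (u - i) = a k * g t + a (k + 1) * g (t - 1) := by
  obtain ⟨h0, h1⟩ := ht
  subst hu
  rw [Finset.sum_eq_add k (k + 1) (by omega)]
  · congr 2 <;> push_cast <;> ring_nf
  · rintro i - ⟨hik, hik'⟩
    rw [hg, mul_zero]
    rcases Nat.lt_or_gt_of_ne hik with h | h
    · have : (i:ℝ) + 1 ≤ k := by exact_mod_cast h
      exact le_abs.2 (.inl (by linarith))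
    · have : (k:ℝ) + 2 ≤ i := by exact_mod_cast (by omega : k + 2 ≤ i)
      exact le_abs.2 (.inr (by linarith))
  all_goals intro h; simp only [Finset.mem_range] at h; omega

lemma sum_sub_odd_eq_of_vanishing {g : ℝ → ℝ} (hg : ∀ y, 1 ≤ |y| → g y = 0)
    {m k : ℕ} (hk : k < m) {t : ℝ} (ht : t ∈ Icc (0:ℝ) 1) {x : ℝ} (hx : (m:ℝ) * x = k + t) :
    ∑ j ∈ Finset.range m, g (2 * m * x - (2 * j + 1)) = g (2 * t - 1) := by
  obtain ⟨h0, h1⟩ := ht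
  rw [Finset.sum_eq_single_of_mem k (Finset.mem_range.2 hk)]
  · congr 1; linear_combination 2 * hx
  · intro j _ hjk
    rw [hg]
    rcases Nat.lt_or_gt_of_ne hjk with h | h
    · have : (j:ℝ) + 1 ≤ k := by exact_mod_cast h
      exact le_abs.2 (.inl (by linarith))
    · have : (k:ℝ) + 1 ≤ j := by exact_mod_cast h
      exact le_abs.2 (.inr (by linarith))

noncomputable def cubicInterp (m : ℕ) (f : ℝ → ℝ) (x : ℝ) : ℝ :=
  ∑ i ∈ Finset.range (m + 1), f (i / m) * cubicBump (m * x - i)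

/-- The corrector `κ` of the paper: twice the sum of the bumps of mesh `1/(2m)` centred at the
midpoints `(2j+1)/(2m)`, so that it vanishes at every node `i/m`. -/
noncomputable def midpointBump (m : ℕ) (x : ℝ) : ℝ :=
  2 * ∑ j ∈ Finset.range m, cubicBump (2 * m * x - (2 * j + 1))

lemma hasDerivAt_cubicInterp (m : ℕ) (f : ℝ → ℝ) (x : ℝ) :
    HasDerivAt (cubicInterp m f)
      (m * ∑ i ∈ Finset.range (m + 1), f (i / m) * cubicBumpDeriv (m * x - i)) x := by
  unfold cubicInterp
  rw [Finset.mul_sum]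
  exact HasDerivAt.fun_sum fun i _ =>
    ((hasDerivAt_cubicBump_affine m i x).const_mul (f (i / m))).congr_deriv (by ring)

lemma hasDerivAt_midpointBump (m : ℕ) (x : ℝ) :
    HasDerivAt (midpointBump m)
      (4 * m * ∑ j ∈ Finset.range m, cubicBumpDeriv (2 * m * x - (2 * j + 1))) x := by
  unfold midpointBump
  refine ((HasDerivAt.fun_sum (u := Finset.range m) fun j _ =>
    hasDerivAt_cubicBump_affine (2 * m) (2 * j + 1) x).const_mul 2).congr_deriv ?_
  rw [Finset.mul_sum, Finset.mul_sum]
  exact Finset.sum_congr rfl fun j _ => by ring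

lemma continuous_cubicInterp (m : ℕ) (f : ℝ → ℝ) : Continuous (cubicInterp m f) :=
  continuous_iff_continuousAt.2 fun x => (hasDerivAt_cubicInterp m f x).continuousAt

lemma continuous_midpointBump (m : ℕ) : Continuous (midpointBump m) :=
  continuous_iff_continuousAt.2 fun x => (hasDerivAt_midpointBump m x).continuousAt

lemma integral_cubicInterp (m : ℕ) (f : ℝ → ℝ) :
    ∫ x in (0:ℝ)..1, cubicInterp m f x =
      ∑ i ∈ Finset.range (m + 1), f (i / m) * ∫ x in (0:ℝ)..1, cubicBump (m * x - i) := by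
  unfold cubicInterp
  rw [intervalIntegral.integral_finsetSum]
  · simp only [intervalIntegral.integral_const_mul]
  · have := cubicBump.continuous
    exact fun i _ => Continuous.intervalIntegrable (by fun_prop) _ _

lemma integral_midpointBump {m : ℕ} (hm : 0 < m) : ∫ x in (0:ℝ)..1, midpointBump m x = 1 := by
  have hm₀ : (0:ℝ) < m := Nat.cast_pos.2 hm
  have each (j : ℕ) (hj : j ∈ Finset.range m) :
      ∫ x in (0:ℝ)..1, cubicBump (2 * m * x - (2 * j + 1)) = (2 * (m:ℝ))⁻¹ := by
    have : (j:ℝ) + 1 ≤ m := by exact_mod_cast Finset.mem_range.1 hj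
    rw [intervalIntegral.integral_comp_mul_sub cubicBump (by positivity),
      cubicBump.integral_of_le (by linarith [j.cast_nonneg (α := ℝ)]) (by linarith), smul_eq_mul,
      mul_one]
  unfold midpointBump
  rw [intervalIntegral.integral_const_mul, intervalIntegral.integral_finsetSum,
    Finset.sum_congr rfl each, Finset.sum_const, Finset.card_range, nsmul_eq_mul]
  · field_simp
  · have := cubicBump.continuous
    exact fun j _ => Continuous.intervalIntegrable (by fun_prop) _ _

section Cell

variable {m k : ℕ} {t x : ℝ}

lemma cubicInterp_eq_of_mem (f : ℝ → ℝ) (hk : k < m) (ht : t ∈ Icc (0:ℝ) 1)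
    (hx : (m:ℝ) * x = k + t) :
    cubicInterp m f x = f (k / m) * cubicBump t + f ((k + 1) / m) * cubicBump (t - 1) := by
  rw [cubicInterp, sum_mul_sub_eq_of_vanishing (fun _ => cubicBump.eq_zero) _ hk ht hx]
  push_cast; rfl

lemma deriv_cubicInterp_eq_of_mem (f : ℝ → ℝ) (hk : k < m) (ht : t ∈ Icc (0:ℝ) 1)
    (hx : (m:ℝ) * x = k + t) :
    deriv (cubicInterp m f) x = m * (f (k / m) - f ((k + 1) / m)) * cubicBumpDeriv t := by
  rw [(hasDerivAt_cubicInterp m f x).deriv,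
    sum_mul_sub_eq_of_vanishing (fun _ => cubicBump.deriv_eq_zero) (fun i => f (i / m)) hk ht hx]
  push_cast
  linear_combination (m * f ((k + 1) / m)) * cubicBump.deriv_add_sub_one ht

lemma midpointBump_eq_of_mem (hk : k < m) (ht : t ∈ Icc (0:ℝ) 1) (hx : (m:ℝ) * x = k + t) :
    midpointBump m x = 2 * cubicBump (2 * t - 1) := by
  rw [midpointBump, sum_sub_odd_eq_of_vanishing (fun _ => cubicBump.eq_zero) hk ht hx]

lemma deriv_midpointBump_eq_of_mem (hk : k < m) (ht : t ∈ Icc (0:ℝ) 1)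
    (hx : (m:ℝ) * x = k + t) :
    deriv (midpointBump m) x = 4 * m * cubicBumpDeriv (2 * t - 1) := by
  rw [(hasDerivAt_midpointBump m x).deriv,
    sum_sub_odd_eq_of_vanishing (fun _ => cubicBump.deriv_eq_zero) hk ht hx]

end Cell

section Bounds

variable {m : ℕ} {f : ℝ → ℝ} {x : ℝ}

lemma abs_cubicInterp_le (hm : 0 < m) {M : ℝ} (hf : ∀ y ∈ Icc (0:ℝ) 1, |f y| ≤ M)
    (hx : x ∈ Icc (0:ℝ) 1) : |cubicInterp m f x| ≤ M := by
  obtain ⟨k, hk, t, ht, hkt⟩ := exists_mul_eq_natCast_add hm hx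
  have hk₁ := natCast_div_mem_Icc hk
  push_cast at hk₁
  rw [cubicInterp_eq_of_mem f hk ht hkt]
  calc _ ≤ M * cubicBump t + M * cubicBump (t - 1) :=
        cubicBump.abs_mul_add_mul_le (hf _ (natCast_div_mem_Icc hk.le)) (hf _ hk₁) t
    _ = M := by rw [← mul_add, cubicBump.add_sub_one ht, mul_one]

lemma abs_sub_cubicInterp_le (hm : 0 < m) {L : ℝ≥0} (hf : LipschitzOnWith L f (Icc 0 1))
    (hx : x ∈ Icc (0:ℝ) 1) : |f x - cubicInterp m f x| ≤ L / (2 * m) := by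
  obtain ⟨k, hk, t, ht, hkt⟩ := exists_mul_eq_natCast_add hm hx
  have hm₀ : (0:ℝ) < m := Nat.cast_pos.2 hm
  have hk₁ := natCast_div_mem_Icc hk
  push_cast at hk₁
  have h₀ : |f x - f (k / m)| ≤ L * (t / m) :=
    (hf.abs_sub_le hx (natCast_div_mem_Icc hk.le)).trans_eq <| by
      rw [show x - k / m = t / m by field_simp; linarith,
        abs_of_nonneg (div_nonneg ht.1 hm₀.le)]
  have h₁ : |f x - f ((k + 1) / m)| ≤ L * ((1 - t) / m) :=
    (hf.abs_sub_le hx hk₁).trans_eq <| by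
      rw [show x - (k + 1) / m = -((1 - t) / m) by field_simp; linarith, abs_neg,
        abs_of_nonneg (div_nonneg (sub_nonneg.2 ht.2) hm₀.le)]
  calc |f x - cubicInterp m f x|
      = |(f x - f (k / m)) * cubicBump t + (f x - f ((k + 1) / m)) * cubicBump (t - 1)| := by
        rw [cubicInterp_eq_of_mem f hk ht hkt]
        congr 1
        linear_combination (-f x) * cubicBump.add_sub_one ht
    _ ≤ L * (t / m) * cubicBump t + L * ((1 - t) / m) * cubicBump (t - 1) :=
        cubicBump.abs_mul_add_mul_le h₀ h₁ t
    _ = L / m * (t * cubicBump t + (1 - t) * cubicBump (t - 1)) := by ring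
    _ ≤ L / m * (1 / 2) := by gcongr; exact cubicBump.mul_add_mul_le ht
    _ = L / (2 * m) := by ring

lemma abs_deriv_cubicInterp_le (hm : 0 < m) {L : ℝ≥0} (hf : LipschitzOnWith L f (Icc 0 1))
    (hx : x ∈ Icc (0:ℝ) 1) : |deriv (cubicInterp m f) x| ≤ 3 / 2 * L := by
  obtain ⟨k, hk, t, ht, hkt⟩ := exists_mul_eq_natCast_add hm hx
  have hm₀ : (0:ℝ) < m := Nat.cast_pos.2 hm
  have hk₁ := natCast_div_mem_Icc hk
  push_cast at hk₁
  have hdiff : |f (k / m) - f ((k + 1) / m)| ≤ L / m :=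
    (hf.abs_sub_le (natCast_div_mem_Icc hk.le) hk₁).trans_eq <| by
      rw [show (k / m : ℝ) - (k + 1) / m = -(1 / m) by ring, abs_neg,
        abs_of_pos (one_div_pos.2 hm₀), mul_one_div]
  rw [deriv_cubicInterp_eq_of_mem f hk ht hkt, abs_mul, abs_mul, abs_of_pos hm₀]
  calc _ ≤ (m:ℝ) * (L / m) * (3 / 2) := by
        gcongr
        exact cubicBump.abs_deriv_le t
    _ = 3 / 2 * L := by field_simp

lemma abs_midpointBump_le (hm : 0 < m) (hx : x ∈ Icc (0:ℝ) 1) : |midpointBump m x| ≤ 2 := by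
  obtain ⟨k, hk, t, ht, hkt⟩ := exists_mul_eq_natCast_add hm hx
  rw [midpointBump_eq_of_mem hk ht hkt, abs_mul, abs_two, abs_of_nonneg (cubicBump.nonneg _)]
  linarith [cubicBump.le_one (2 * t - 1)]

lemma abs_deriv_midpointBump_le (hm : 0 < m) (hx : x ∈ Icc (0:ℝ) 1) :
    |deriv (midpointBump m) x| ≤ 6 * m := by
  obtain ⟨k, hk, t, ht, hkt⟩ := exists_mul_eq_natCast_add hm hx
  rw [deriv_midpointBump_eq_of_mem hk ht hkt, abs_mul, abs_of_nonneg (by positivity)]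
  nlinarith [cubicBump.abs_deriv_le (2 * t - 1), (Nat.cast_pos.2 hm : (0:ℝ) < m)]

lemma abs_integral_sub_cubicInterp_le_two_mul (hm : 0 < m) {M : ℝ}
    (hf : ∀ y ∈ Icc (0:ℝ) 1, |f y| ≤ M) : |∫ t in (0:ℝ)..1, f t - cubicInterp m f t| ≤ 2 * M :=
  abs_integral_le_of_forall_mem_Icc fun t ht =>
    (abs_sub _ _).trans (by linarith [hf t ht, abs_cubicInterp_le hm hf ht])

lemma abs_integral_sub_cubicInterp_le (hm : 0 < m) {L : ℝ≥0}
    (hf : LipschitzOnWith L f (Icc 0 1)) :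
    |∫ t in (0:ℝ)..1, f t - cubicInterp m f t| ≤ L / (2 * m) :=
  abs_integral_le_of_forall_mem_Icc fun _ ht => abs_sub_cubicInterp_le hm hf ht

end Bounds

/-- The projection `Π_η`, with the coefficient of `κ` written as `∫ (f - I f)`. -/
noncomputable def meanProj (m : ℕ) (f : ℝ → ℝ) (x : ℝ) : ℝ :=
  cubicInterp m f x + (∫ t in (0:ℝ)..1, f t - cubicInterp m f t) * midpointBump m x

section MeanProj

variable {m : ℕ} {f : ℝ → ℝ} {x : ℝ}

lemma integral_meanProj (hm : 0 < m) (hf : IntervalIntegrable f MeasureTheory.volume 0 1) :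
    ∫ x in (0:ℝ)..1, meanProj m f x = ∫ x in (0:ℝ)..1, f x := by
  have hI := (continuous_cubicInterp m f).intervalIntegrable (μ := MeasureTheory.volume) 0 1
  unfold meanProj
  rw [intervalIntegral.integral_add hI, intervalIntegral.integral_const_mul,
    integral_midpointBump hm, intervalIntegral.integral_sub hf hI]
  · ring
  · exact (continuous_const.mul (continuous_midpointBump m)).intervalIntegrable 0 1

lemma abs_meanProj_le_five_mul (hm : 0 < m) {M : ℝ} (hf : ∀ y ∈ Icc (0:ℝ) 1, |f y| ≤ M)
    (hx : x ∈ Icc (0:ℝ) 1) : |meanProj m f x| ≤ 5 * M :=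
  (abs_add_mul_le (abs_cubicInterp_le hm hf hx) (abs_integral_sub_cubicInterp_le_two_mul hm hf)
    (abs_midpointBump_le hm hx)).trans_eq (by ring)

lemma abs_meanProj_le (hm : 0 < m) {M : ℝ} (hfM : ∀ y ∈ Icc (0:ℝ) 1, |f y| ≤ M) {L : ℝ≥0}
    (hfL : LipschitzOnWith L f (Icc 0 1)) (hx : x ∈ Icc (0:ℝ) 1) :
    |meanProj m f x| ≤ M + L / m :=
  (abs_add_mul_le (abs_cubicInterp_le hm hfM hx) (abs_integral_sub_cubicInterp_le hm hfL)
    (abs_midpointBump_le hm hx)).trans_eq (by ring)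

lemma abs_meanProj_sub_le (hm : 0 < m) {L : ℝ≥0} (hf : LipschitzOnWith L f (Icc 0 1))
    (hx : x ∈ Icc (0:ℝ) 1) : |meanProj m f x - f x| ≤ 3 * L / (2 * m) := by
  rw [show meanProj m f x - f x = -(f x - cubicInterp m f x)
    + (∫ t in (0:ℝ)..1, f t - cubicInterp m f t) * midpointBump m x by unfold meanProj; ring]
  exact (abs_add_mul_le ((abs_neg _).trans_le (abs_sub_cubicInterp_le hm hf hx))
    (abs_integral_sub_cubicInterp_le hm hf) (abs_midpointBump_le hm hx)).trans_eq (by ring)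

lemma abs_deriv_meanProj_le (hm : 0 < m) {L : ℝ≥0} (hf : LipschitzOnWith L f (Icc 0 1))
    (hx : x ∈ Icc (0:ℝ) 1) : |deriv (meanProj m f) x| ≤ 9 / 2 * L := by
  have hd : HasDerivAt (meanProj m f) (deriv (cubicInterp m f) x +
      (∫ t in (0:ℝ)..1, f t - cubicInterp m f t) * deriv (midpointBump m) x) x :=
    (hasDerivAt_cubicInterp m f x).differentiableAt.hasDerivAt.fun_add
      ((hasDerivAt_midpointBump m x).differentiableAt.hasDerivAt.const_mul _)
  have hm₀ : (m:ℝ) ≠ 0 := Nat.cast_ne_zero.2 hm.ne'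
  rw [hd.deriv]
  exact (abs_add_mul_le (abs_deriv_cubicInterp_le hm hf hx)
    (abs_integral_sub_cubicInterp_le hm hf) (abs_deriv_midpointBump_le hm hx)).trans_eq
    (by field_simp; ring)

end MeanProj

/-- properties of the integral-preserving projection
`Π_η f = Σ_i f(a_i) φ_i + (∫f - Σ_i f(a_i)∫φ_i)·κ`, where `κ = 2Σ_{j<m} φ̃_{2j+1}`
is built from the partition of unity of mesh `1/(2m)` (so `κ(a_i)=0`, `∫κ=1`).
For `f ∈ C¹([0,1])` and `m > 2`:
(1) `‖Π_η f‖_∞ ≤ 5‖f‖_∞`; (2) `‖Π_η f‖_∞ ≤ ‖f‖_∞ + 2‖f'‖_∞/m`;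
(3) `‖Π_η f‖_{C¹} ≤ (11/2)‖f‖_{C¹}`; (4) `‖Π_η f - f‖_∞ ≤ 3‖f'‖_∞/m`;
and `∫ Π_η f = ∫ f`. -/
theorem stmt12
    (m : ℕ) (hm : 2 < m)
    (φ : ℝ → ℝ)
    (hφ : ∀ x : ℝ, φ x =
      if x < -1 then 0
      else if x ≤ 0 then 1 - 3 * x ^ 2 - 2 * x ^ 3
      else if x ≤ 1 then 1 - 3 * x ^ 2 + 2 * x ^ 3
      else 0)
    (κ : ℝ → ℝ)
    (hκ : ∀ x : ℝ, κ x = 2 * ∑ j ∈ Finset.range m, φ (2 * m * x - (2 * j + 1)))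
    (P : (ℝ → ℝ) → ℝ → ℝ)
    (hP : ∀ f x, P f x =
      (∑ i ∈ Finset.range (m + 1), f (i / m) * φ (m * x - i))
        + ((∫ t in (0:ℝ)..1, f t)
            - ∑ i ∈ Finset.range (m + 1), f (i / m) * ∫ t in (0:ℝ)..1, φ (m * t - i))
          * κ x) :
    ∀ f : ℝ → ℝ, ContDiff ℝ 1 f →
      (∀ x ∈ Icc (0:ℝ) 1, |P f x| ≤ 5 * ⨆ y ∈ Icc (0:ℝ) 1, |f y|) ∧
      (∀ x ∈ Icc (0:ℝ) 1, |P f x|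
          ≤ (⨆ y ∈ Icc (0:ℝ) 1, |f y|)
            + 2 * (⨆ y ∈ Icc (0:ℝ) 1, |deriv f y|) / m) ∧
      ((⨆ x ∈ Icc (0:ℝ) 1, |P f x|) + (⨆ x ∈ Icc (0:ℝ) 1, |deriv (P f) x|)
          ≤ (11 / 2) *
              ((⨆ y ∈ Icc (0:ℝ) 1, |f y|) + ⨆ y ∈ Icc (0:ℝ) 1, |deriv f y|)) ∧
      (∀ x ∈ Icc (0:ℝ) 1, |P f x - f x|
          ≤ 3 * (⨆ y ∈ Icc (0:ℝ) 1, |deriv f y|) / m) ∧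
      (∫ t in (0:ℝ)..1, P f t) = ∫ t in (0:ℝ)..1, f t := by
  obtain rfl : φ = cubicBump := funext hφ
  obtain rfl : κ = midpointBump m := funext hκ
  intro f hf
  have hm₀ : 0 < m := by omega
  have hfi : IntervalIntegrable f MeasureTheory.volume 0 1 := hf.continuous.intervalIntegrable 0 1
  have hPf : P f = meanProj m f := funext fun x => by
    rw [hP, meanProj, intervalIntegral.integral_sub hfi
      ((continuous_cubicInterp m f).intervalIntegrable 0 1), integral_cubicInterp]
    rfl
  set Mf := ⨆ y ∈ Icc (0:ℝ) 1, |f y|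
  set Md := ⨆ y ∈ Icc (0:ℝ) 1, |deriv f y|
  have hMf : ∀ y ∈ Icc (0:ℝ) 1, |f y| ≤ Mf := fun y =>
    le_biSup_of_continuousOn isCompact_Icc hf.continuous.abs.continuousOn
  have hMf₀ : 0 ≤ Mf := (abs_nonneg _).trans (hMf 0 (left_mem_Icc.2 zero_le_one))
  have hMd₀ : 0 ≤ Md := Real.iSup_nonneg fun _ => Real.iSup_nonneg fun _ => abs_nonneg _
  have hL := hf.lipschitzOnWith_Icc 0 1
  have hm₂ : (2:ℝ) < m := by exact_mod_cast hm
  rw [hPf, ← Real.coe_toNNReal Md hMd₀]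
  refine ⟨fun x hx => abs_meanProj_le_five_mul hm₀ hMf hx,
    fun x hx => (abs_meanProj_le hm₀ hMf hL hx).trans ?_, ?_,
    fun x hx => (abs_meanProj_sub_le hm₀ hL hx).trans ?_, integral_meanProj hm₀ hfi⟩
  · gcongr; linarith
  · have h₀ : ⨆ x ∈ Icc (0:ℝ) 1, |meanProj m f x| ≤ Mf + Md.toNNReal / 2 :=
      Real.biSup_le (fun x hx => (abs_meanProj_le hm₀ hMf hL hx).trans (by gcongr))
        (by positivity)
    have h₁ : ⨆ x ∈ Icc (0:ℝ) 1, |deriv (meanProj m f) x| ≤ 9 / 2 * Md.toNNReal :=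
      Real.biSup_le (fun x hx => abs_deriv_meanProj_le hm₀ hL hx) (by positivity)
    linarith
  · gcongr; linarith
end

section
/- Two-norm recursive contraction estimate: suppose ‖L^{n_1} g‖_s ≤ A λ_1^{n_1} ‖g‖_s + B‖g‖_w for all g, ‖(L_δ^n − L^n)g‖_w ≤ δ(C‖g‖_s + nD‖g‖_w), and ‖L_δ^{n_1} v‖_w ≤ λ_2 ‖v‖_w for all v ∈ V (zero-mass measures) with λ_2 < 1. Then for g_0 ∈ V and g_{i+1} = L^{n_1} g_i, the vector (‖g_{i}‖_s, ‖g_{i}‖_w) is componentwise bounded by M^i (‖g_0‖_s, ‖g_0‖_w), where M is the nonnegative 2×2 matrix with rows (A λ_1^{n_1}, B) and (δC, δ n_1 D + λ_2). Moreover, if (a,b) is a positive left eigenvector of M with eigenvalue ρ_M and a+b=1, then the norm ‖g‖_{(a,b)} = a‖g‖_s + b‖g‖_w satisfies ‖L^{k n_1} g‖_{(a,b)} ≤ ρ_M^k ‖g‖_{(a,b)} for all g ∈ V. -/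
/-- two-norm recursive contraction estimate.  Given the Lasota–Yorke
inequality `‖L^{n₁}g‖_s ≤ Aλ₁^{n₁}‖g‖_s + B‖g‖_w`, the approximation bound
`‖(L_δⁿ - Lⁿ)g‖_w ≤ δ(C‖g‖_s + nD‖g‖_w)`, and the contraction
`‖L_δ^{n₁}v‖_w ≤ λ₂‖v‖_w` on zero-mass `v` (λ₂ < 1), for `g₀` of zero mass and
`g_{i+1} = L^{n₁}g_i` the vector `(‖g_i‖_s, ‖g_i‖_w)` is componentwise dominated by
`M^i (‖g₀‖_s, ‖g₀‖_w)` with `M = [[Aλ₁^{n₁}, B],[δC, δn₁D + λ₂]]`; moreover, if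
`(a,b)` is a positive left eigenvector of `M` with eigenvalue `ρ_M` and `a+b=1`,
then `‖g‖_{(a,b)} = a‖g‖_s + b‖g‖_w` satisfies
`‖L^{kn₁}g‖_{(a,b)} ≤ ρ_M^k ‖g‖_{(a,b)}` on zero-mass `g`. -/
theorem stmt18
    {X : Type*} [AddCommGroup X] [Module ℝ X]
    (ns nw : Seminorm ℝ X) (hws : ∀ x, nw x ≤ ns x)
    (mass : X →ₗ[ℝ] ℝ)
    (L Lδ : Module.End ℝ X)
    (hinv : ∀ x, mass (L x) = mass x)
    (A lam1 B δ C D lam2 : ℝ) (n1 : ℕ) (hn1 : 1 ≤ n1)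
    (hA : 0 ≤ A) (hB : 0 ≤ B) (hδ : 0 ≤ δ) (hC : 0 ≤ C) (hD : 0 ≤ D)
    (hl10 : 0 < lam1) (hl11 : lam1 < 1) (hl20 : 0 ≤ lam2) (hl21 : lam2 < 1)
    (hLY : ∀ g, ns ((L ^ n1) g) ≤ A * lam1 ^ n1 * ns g + B * nw g)
    (happrox : ∀ n : ℕ, ∀ g, nw ((Lδ ^ n) g - (L ^ n) g) ≤ δ * (C * ns g + n * D * nw g))
    (hcontr : ∀ v, mass v = 0 → nw ((Lδ ^ n1) v) ≤ lam2 * nw v) :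
    (∀ g0 : X, mass g0 = 0 → ∀ i : ℕ,
      ns ((L ^ (i * n1)) g0)
          ≤ ((!![A * lam1 ^ n1, B; δ * C, δ * (n1 : ℝ) * D + lam2] ^ i).mulVec
              ![ns g0, nw g0]) 0 ∧
      nw ((L ^ (i * n1)) g0)
          ≤ ((!![A * lam1 ^ n1, B; δ * C, δ * (n1 : ℝ) * D + lam2] ^ i).mulVec
              ![ns g0, nw g0]) 1) ∧
    (∀ a b ρM : ℝ, 0 < a → 0 < b → a + b = 1 →
      a * (A * lam1 ^ n1) + b * (δ * C) = ρM * a →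
      a * B + b * (δ * (n1 : ℝ) * D + lam2) = ρM * b →
      ∀ g, mass g = 0 → ∀ k : ℕ,
        a * ns ((L ^ (k * n1)) g) + b * nw ((L ^ (k * n1)) g)
          ≤ ρM ^ k * (a * ns g + b * nw g)) := by

  have hmass : ∀ n : ℕ, ∀ g : X, mass ((L ^ n) g) = mass g := by
    intro n
    induction n with
    | zero => intro g; simp
    | succ n ih =>
      intro g
      rw [pow_succ', Module.End.mul_apply, hinv, ih]
  have hkey : ∀ g : X, mass g = 0 →
      nw ((L ^ n1) g) ≤ δ * C * ns g + (δ * (n1 : ℝ) * D + lam2) * nw g := by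
    intro g hg
    have h1 : nw ((L ^ n1) g) ≤ nw ((Lδ ^ n1) g) + nw ((Lδ ^ n1) g - (L ^ n1) g) := by
      have h := map_sub_le_add nw ((Lδ ^ n1) g) ((Lδ ^ n1) g - (L ^ n1) g)
      rwa [sub_sub_cancel] at h
    have h2 := hcontr g hg
    have h3 := happrox n1 g
    nlinarith [h1, h2, h3]
  constructor
  · intro g0 hg0 i
    induction i with
    | zero => simp
    | succ i ih =>
      obtain ⟨ih1, ih2⟩ := ih
      set M := !![A * lam1 ^ n1, B; δ * C, δ * (n1 : ℝ) * D + lam2] with hM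
      have hpow : (L ^ ((i + 1) * n1)) g0 = (L ^ n1) ((L ^ (i * n1)) g0) := by
        rw [show (i + 1) * n1 = n1 + i * n1 by ring, pow_add, Module.End.mul_apply]
      have hmv : ∀ j : Fin 2, ((M ^ (i + 1)).mulVec ![ns g0, nw g0]) j
          = M j 0 * ((M ^ i).mulVec ![ns g0, nw g0]) 0
            + M j 1 * ((M ^ i).mulVec ![ns g0, nw g0]) 1 := by
        intro j
        rw [pow_succ', ← Matrix.mulVec_mulVec]
        simp [Matrix.mulVec, dotProduct, Fin.sum_univ_two]
      have hmassi : mass ((L ^ (i * n1)) g0) = 0 := by rw [hmass]; exact hg0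
      constructor
      · rw [hpow, hmv 0]
        have h := hLY ((L ^ (i * n1)) g0)
        have e0 : M 0 0 = A * lam1 ^ n1 := by simp [hM]
        have e1 : M 0 1 = B := by simp [hM]
        rw [e0, e1]
        nlinarith [mul_le_mul_of_nonneg_left ih1 (mul_nonneg hA (pow_nonneg hl10.le n1)),
          mul_le_mul_of_nonneg_left ih2 hB]
      · rw [hpow, hmv 1]
        have h := hkey ((L ^ (i * n1)) g0) hmassi
        have e0 : M 1 0 = δ * C := by simp [hM]
        have e1 : M 1 1 = δ * (n1 : ℝ) * D + lam2 := by simp [hM]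
        rw [e0, e1]
        nlinarith [mul_le_mul_of_nonneg_left ih1 (mul_nonneg hδ hC),
          mul_le_mul_of_nonneg_left ih2 (by positivity : (0:ℝ) ≤ δ * (n1 : ℝ) * D + lam2)]
  · intro a b ρM ha hb hab hea heb g hg k
    have hρ : 0 ≤ ρM := by
      have h0 : 0 ≤ a * (A * lam1 ^ n1) + b * (δ * C) := by positivity
      nlinarith [hea]
    induction k with
    | zero => simp
    | succ k ih =>
      have hpow : (L ^ ((k + 1) * n1)) g = (L ^ n1) ((L ^ (k * n1)) g) := by
        rw [show (k + 1) * n1 = n1 + k * n1 by ring, pow_add, Module.End.mul_apply]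
      have hmassk : mass ((L ^ (k * n1)) g) = 0 := by rw [hmass]; exact hg
      have h1 := hLY ((L ^ (k * n1)) g)
      have h2 := hkey ((L ^ (k * n1)) g) hmassk
      set u := ns ((L ^ (k * n1)) g)
      set w := nw ((L ^ (k * n1)) g)
      have step : a * ns ((L ^ ((k + 1) * n1)) g) + b * nw ((L ^ ((k + 1) * n1)) g)
          ≤ ρM * (a * u + b * w) := by
        rw [hpow]
        calc a * ns ((L ^ n1) ((L ^ (k * n1)) g)) + b * nw ((L ^ n1) ((L ^ (k * n1)) g))
            ≤ a * (A * lam1 ^ n1 * u + B * w) + b * (δ * C * u + (δ * (n1 : ℝ) * D + lam2) * w) := by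
              have := mul_le_mul_of_nonneg_left h1 ha.le
              have := mul_le_mul_of_nonneg_left h2 hb.le
              linarith
          _ = (a * (A * lam1 ^ n1) + b * (δ * C)) * u
              + (a * B + b * (δ * (n1 : ℝ) * D + lam2)) * w := by ring
          _ = (ρM * a) * u + (ρM * b) * w := by rw [hea, heb]
          _ = ρM * (a * u + b * w) := by ring
      calc a * ns ((L ^ ((k + 1) * n1)) g) + b * nw ((L ^ ((k + 1) * n1)) g)
          ≤ ρM * (a * ns ((L ^ (k * n1)) g) + b * nw ((L ^ (k * n1)) g)) := step
        _ ≤ ρM * (ρM ^ k * (a * ns g + b * nw g)) := mul_le_mul_of_nonneg_left ih hρ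
        _ = ρM ^ (k + 1) * (a * ns g + b * nw g) := by ring
end
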